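/- (Error bound theorem) The total expected error counts of the universal predictor Θ_ξ and the informed predictor Θ_μ satisfy 0 ≤ E_{nΘ_ξ} − E_{nΘ_μ} ≤ H_n + √(4·E_{nΘ_μ}·H_n + H_n²) ≤ 2H_n + 2√(E_{nΘ_μ}·H_n), where H_n ≤ ln(1/w_μ). -/

import Mathlib

open scoped BigOperators

/-- Conditional probability ρ(a | l) := ρ(l·a)/ρ(l) via Bayes' rule. -/
noncomputable def condP {A : Type} [Fintype A] (ρ : List A → ℝ) (l : List A) (a : A) : ℝ :=
  ρ (l ++ [a]) / ρ l

/-- Cumulative expected conditional relative entropy H_n between μ and ξ. -/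
noncomputable def relEnt {A : Type} [Fintype A] (μ ξ : List A → ℝ) (n : ℕ) : ℝ :=
  ∑ k ∈ Finset.range n, ∑ x : Fin k → A, μ (List.ofFn x) *
    ∑ a : A, condP μ (List.ofFn x) a * Real.log (condP μ (List.ofFn x) a / condP ξ (List.ofFn x) a)

/-- Total μ-expected number of prediction errors in the first n predictions
of the deterministic predictor p. -/
noncomputable def errE {A : Type} [Fintype A] (μ : List A → ℝ) (p : List A → A) (n : ℕ) : ℝ :=
  ∑ k ∈ Finset.range n, ∑ x : Fin k → A,
    μ (List.ofFn x) * (1 - condP μ (List.ofFn x) (p (List.ofFn x)))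

/-!
At a history `l` write `m = μ(·|l)` and `s = ξ(·|l)`. The informed predictor outputs a mode `z`
of `m`, the universal one a mode `y` of `s`, so `m z - m y ≤ 2 ‖m - s‖_TV`, which Pinsker's
inequality bounds by the conditional relative entropy `d_l`. As `m y + m z ≤ 1` unless `y = z`,
this gives `(m z - m y)² ≤ 2 (e_ξ + e_μ) d_l` for the error probabilities `e_ξ = 1 - m y` and
`e_μ = 1 - m z`. Weighting by `μ l` and summing over all histories of length `< n` with
Cauchy–Schwarz yields `(E_ξ - E_μ)² ≤ 2 (E_ξ + E_μ) H_n`, a quadratic inequality in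
`E_ξ - E_μ` whose solution is the stated bound. By the chain rule `H_n` is the relative entropy
between the laws of the first `n` letters under `μ` and `ξ`, and `ξ ≥ w_μ μ` bounds it by
`ln (1 / w_μ)`.
-/

open Real Set

lemma monotoneOn_log_sub_log_one_sub_sub_four_mul :
    MonotoneOn (fun x => log x - log (1 - x) - 4 * x) (Ioo 0 1) := by
  have hderiv : ∀ x ∈ Ioo (0 : ℝ) 1,
      HasDerivAt (fun x => log x - log (1 - x) - 4 * x) (x⁻¹ + (1 - x)⁻¹ - 4) x := by
    intro x ⟨hx0, hx1⟩
    have h1x : HasDerivAt (fun x => log (1 - x)) ((1 - x)⁻¹ * (-1)) x :=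
      (hasDerivAt_log (by linarith)).comp x ((hasDerivAt_id' x).const_sub 1)
    exact (((hasDerivAt_log hx0.ne').sub h1x).sub ((hasDerivAt_id' x).const_mul 4)).congr_deriv
      (by ring)
  refine monotoneOn_of_deriv_nonneg (convex_Ioo 0 1)
    (fun x hx => (hderiv x hx).continuousAt.continuousWithinAt)
    (fun x hx => (hderiv x (interior_subset hx)).differentiableAt.differentiableWithinAt)
    fun x hx => ?_
  rw [interior_Ioo] at hx
  obtain ⟨hx0, hx1⟩ := hx
  rw [(hderiv x ⟨hx0, hx1⟩).deriv, inv_add_inv hx0.ne' (by linarith), sub_nonneg,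
    le_div_iff₀ (by nlinarith)]
  nlinarith [sq_nonneg (2 * x - 1)]

lemma two_mul_sq_sub_le_binary_kl {p q : ℝ} (hq0 : 0 < q) (hq1 : q < 1) (hqp : q ≤ p)
    (hp1 : p ≤ 1) :
    2 * (p - q) ^ 2 ≤ p * log (p / q) + (1 - p) * log ((1 - p) / (1 - q)) := by
  set g : ℝ → ℝ := fun x =>
    x * log x + (1 - x) * log (1 - x) - x * log q - (1 - x) * log (1 - q) - 2 * (x - q) ^ 2
  set G : ℝ → ℝ := fun x => log x - log (1 - x) - 4 * x
  -- `g' = G - G q`, which is nonnegative to the right of `q` by monotonicity of `G`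
  have hderiv : ∀ x ∈ Ioo (0 : ℝ) 1, HasDerivAt g (G x - G q) x := by
    intro x ⟨hx0, hx1⟩
    have h1x : HasDerivAt (fun x => (1 - x) * log (1 - x)) ((log (1 - x) + 1) * (-1)) x :=
      (hasDerivAt_mul_log (by linarith)).comp x ((hasDerivAt_id' x).const_sub 1)
    exact ((((((hasDerivAt_mul_log hx0.ne').add h1x).sub
      ((hasDerivAt_id' x).mul_const (log q))).sub
      (((hasDerivAt_id' x).const_sub 1).mul_const (log (1 - q)))).sub
      ((((hasDerivAt_id' x).sub_const q).pow 2).const_mul 2))).congr_deriv (by simp only [G]; ring)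
  have hmono : MonotoneOn g (Icc q 1) := by
    have hcont : Continuous g := by
      have := continuous_mul_log.comp (continuous_sub_left (1 : ℝ))
      exact (((continuous_mul_log.add this).sub (by fun_prop)).sub (by fun_prop)).sub
        (by fun_prop)
    have hmem : ∀ x ∈ interior (Icc q 1), x ∈ Ioo 0 1 ∧ q ≤ x := fun x hx => by
      rw [interior_Icc] at hx
      exact ⟨⟨hq0.trans hx.1, hx.2⟩, hx.1.le⟩
    refine monotoneOn_of_deriv_nonneg (convex_Icc q 1) hcont.continuousOn
      (fun x hx => (hderiv x (hmem x hx).1).differentiableAt.differentiableWithinAt)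
      fun x hx => ?_
    rw [(hderiv x (hmem x hx).1).deriv, sub_nonneg]
    exact monotoneOn_log_sub_log_one_sub_sub_four_mul ⟨hq0, hq1⟩ (hmem x hx).1 (hmem x hx).2
  have hgp : g q ≤ g p := hmono ⟨le_rfl, hq1.le⟩ ⟨hqp, hp1⟩ hqp
  have hlog_p : p * log (p / q) = p * log p - p * log q := by
    rw [log_div (by linarith) hq0.ne']; ring
  have hlog_1p :
      (1 - p) * log ((1 - p) / (1 - q)) = (1 - p) * log (1 - p) - (1 - p) * log (1 - q) := by
    rcases hp1.eq_or_lt with rfl | hp1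
    · simp
    · rw [log_div (by linarith) (by linarith)]; ring
  simp only [g, sub_self] at hgp
  linarith

open Finset in
/-- The log-sum inequality. -/
lemma sum_mul_log_div_sum_le {ι : Type*} (F : Finset ι) {p q : ι → ℝ}
    (hp : ∀ i ∈ F, 0 ≤ p i) (hq : ∀ i ∈ F, 0 ≤ q i) (hpq : ∀ i ∈ F, q i = 0 → p i = 0) :
    (∑ i ∈ F, p i) * log ((∑ i ∈ F, p i) / ∑ i ∈ F, q i) ≤ ∑ i ∈ F, p i * log (p i / q i) := by
  set Q := ∑ i ∈ F, q i
  rcases (sum_nonneg hq).eq_or_lt with hQ | hQ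
  · have hp0 : ∀ i ∈ F, p i = 0 := fun i hi =>
      hpq i hi ((sum_eq_zero_iff_of_nonneg hq).1 hQ.symm i hi)
    rw [sum_eq_zero hp0, zero_mul, sum_eq_zero fun i hi => by rw [hp0 i hi, zero_mul]]
  -- Jensen for `x ↦ x log x` at the points `p i / q i` with weights `q i / Q`
  have hjensen := convexOn_mul_log.map_sum_le (t := F) (w := fun i => q i / Q)
    (p := fun i => p i / q i) (fun i hi => div_nonneg (hq i hi) hQ.le)
    (by rw [← sum_div, div_self hQ.ne'])
    (fun i hi => mem_Ici.2 (div_nonneg (hp i hi) (hq i hi)))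
  have hweight : ∀ i ∈ F, q i / Q * (p i / q i) = p i / Q := fun i hi => by
    rcases eq_or_ne (q i) 0 with h | h
    · simp [h, hpq i hi h]
    · field_simp
  have hterm : ∀ i ∈ F, q i / Q * (p i / q i * log (p i / q i)) = p i * log (p i / q i) / Q :=
    fun i hi => by rw [← mul_assoc, hweight i hi, div_mul_eq_mul_div]
  simp only [smul_eq_mul] at hjensen
  rw [sum_congr rfl hweight, sum_congr rfl hterm, ← sum_div, ← sum_div, div_mul_eq_mul_div]
    at hjensen
  exact (div_le_div_iff_of_pos_right hQ).1 hjensen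

lemma sub_le_add_sqrt_of_sq_sub_le {a b H : ℝ} (h : (a - b) ^ 2 ≤ (a + b) * (2 * H)) :
    a - b ≤ H + √(4 * b * H + H ^ 2) := by
  have hsq : (a - b - H) ^ 2 ≤ 4 * b * H + H ^ 2 := by nlinarith
  linarith [le_abs_self (a - b - H), Real.abs_le_sqrt hsq]

lemma add_sqrt_four_mul_add_sq_le {E H : ℝ} (hE : 0 ≤ E) (hH : 0 ≤ H) :
    H + √(4 * E * H + H ^ 2) ≤ 2 * H + 2 * √(E * H) := by
  have hEH := Real.sq_sqrt (mul_nonneg hE hH)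
  have : √(4 * E * H + H ^ 2) ≤ H + 2 * √(E * H) :=
    Real.sqrt_le_iff.2 ⟨by positivity, by nlinarith [Real.sqrt_nonneg (E * H)]⟩
  linarith

section TotalVariation

open Finset

variable {ι : Type*} [Fintype ι]

/-- For probability vectors this is the total variation distance `½ ∑ |m a - s a|`. -/
def tvDist (m s : ι → ℝ) : ℝ := ∑ a, (m a - s a)⁺

lemma sub_le_tvDist (m s : ι → ℝ) (b : ι) : m b - s b ≤ tvDist m s :=
  (le_posPart _).trans (single_le_sum (fun a _ => posPart_nonneg (m a - s a)) (mem_univ b))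

lemma tvDist_comm {m s : ι → ℝ} (h : ∑ a, m a = ∑ a, s a) : tvDist m s = tvDist s m := by
  have hdiff : tvDist m s - tvDist s m = ∑ a, (m a - s a) := by
    rw [tvDist, tvDist, ← sum_sub_distrib]
    exact sum_congr rfl fun a _ => by rw [← neg_sub (m a), posPart_neg, posPart_sub_negPart]
  rw [sum_sub_distrib, h, sub_self] at hdiff
  linarith

lemma sub_le_two_mul_tvDist {m s : ι → ℝ} (h : ∑ a, m a = ∑ a, s a) {y : ι}
    (hy : ∀ a, s a ≤ s y) (z : ι) : m z - m y ≤ 2 * tvDist m s := by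
  have hz := sub_le_tvDist m s z
  have hy' := sub_le_tvDist s m y
  rw [← tvDist_comm h] at hy'
  linarith [hy z]

/-- **Pinsker's inequality**. -/
theorem two_mul_tvDist_sq_le {m s : ι → ℝ} (hm : m ∈ stdSimplex ℝ ι)
    (hs : s ∈ stdSimplex ℝ ι) (hms : ∀ a, s a = 0 → m a = 0) :
    2 * tvDist m s ^ 2 ≤ ∑ a, m a * log (m a / s a) := by
  classical
  -- reduce to the two-point distributions of the event `T = {s < m}` and its complement
  set T := univ.filter fun a => s a < m a
  set P := ∑ a ∈ T, m a
  set Q := ∑ a ∈ T, s a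
  have htv : tvDist m s = P - Q := by
    rw [tvDist, ← sum_sub_distrib, sum_filter]
    exact sum_congr rfl fun a _ => by simp only [posPart_eq_ite_lt, sub_pos]
  have hPc : ∑ a ∈ univ.filter (fun a => ¬ s a < m a), m a = 1 - P := by
    rw [← hm.2, ← sum_filter_add_sum_filter_not univ (fun a => s a < m a) m]; ring
  have hQc : ∑ a ∈ univ.filter (fun a => ¬ s a < m a), s a = 1 - Q := by
    rw [← hs.2, ← sum_filter_add_sum_filter_not univ (fun a => s a < m a) s]; ring
  have hlogsum : P * log (P / Q) + (1 - P) * log ((1 - P) / (1 - Q)) ≤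
      ∑ a, m a * log (m a / s a) := by
    rw [← sum_filter_add_sum_filter_not univ (fun a => s a < m a), ← hPc, ← hQc]
    exact add_le_add (sum_mul_log_div_sum_le _ (fun a _ => hm.1 a) (fun a _ => hs.1 a)
      fun a _ => hms a) (sum_mul_log_div_sum_le _ (fun a _ => hm.1 a) (fun a _ => hs.1 a)
      fun a _ => hms a)
  rcases T.eq_empty_or_nonempty with hT | ⟨b, hb⟩
  · simp only [P, Q, hT, sum_empty] at htv hlogsum
    simpa [htv] using hlogsum
  have hsb : 0 < s b := (hs.1 b).lt_of_ne fun h => by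
    have := (mem_filter.1 hb).2
    rw [← h, hms b h.symm] at this
    exact this.false
  have hQ0 : 0 < Q := hsb.trans_le (single_le_sum (fun a _ => hs.1 a) hb)
  have hQP : Q < P := sum_lt_sum_of_nonempty ⟨b, hb⟩ fun a ha => (mem_filter.1 ha).2
  have hP1 : P ≤ 1 := hm.2 ▸ sum_le_sum_of_subset_of_nonneg (subset_univ T) fun a _ _ => hm.1 a
  rw [htv]
  exact (two_mul_sq_sub_le_binary_kl hQ0 (by linarith) hQP.le hP1).trans hlogsum

lemma sq_sub_le_of_forall_le {m s : ι → ℝ} (hm : m ∈ stdSimplex ℝ ι)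
    (hs : s ∈ stdSimplex ℝ ι) (hms : ∀ a, s a = 0 → m a = 0) {y z : ι}
    (hy : ∀ a, s a ≤ s y) (hz : ∀ a, m a ≤ m z) :
    (m z - m y) ^ 2 ≤ 2 * ((1 - m y) + (1 - m z)) * ∑ a, m a * log (m a / s a) := by
  classical
  have hpinsker := two_mul_tvDist_sq_le hm hs hms
  have hkl : 0 ≤ ∑ a, m a * log (m a / s a) := (by positivity : (0 : ℝ) ≤ _).trans hpinsker
  have hmz : m z ≤ 1 := hm.2 ▸ single_le_sum (fun a _ => hm.1 a) (mem_univ z)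
  rcases eq_or_ne y z with rfl | hyz
  · rw [sub_self, zero_pow two_ne_zero]
    exact mul_nonneg (by linarith) hkl
  have hyz1 : m y + m z ≤ 1 := by
    rw [← sum_pair hyz, ← hm.2]
    exact sum_le_sum_of_subset_of_nonneg (subset_univ _) fun a _ _ => hm.1 a
  calc (m z - m y) ^ 2 ≤ (2 * tvDist m s) ^ 2 :=
        pow_le_pow_left₀ (sub_nonneg.2 (hz y))
          (sub_le_two_mul_tvDist (hm.2.trans hs.2.symm) hy z) 2
    _ ≤ 2 * ∑ a, m a * log (m a / s a) := by linarith
    _ ≤ 2 * ((1 - m y) + (1 - m z)) * ∑ a, m a * log (m a / s a) := by nlinarith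

end TotalVariation

lemma sum_ofFn_succ {A M : Type*} [Fintype A] [AddCommMonoid M] (f : List A → M) (k : ℕ) :
    ∑ x : Fin (k + 1) → A, f (List.ofFn x) = ∑ x : Fin k → A, ∑ a, f (List.ofFn x ++ [a]) := by
  rw [← (Fin.snocEquiv fun _ => A).sum_comp, Fintype.sum_prod_type, Finset.sum_comm]
  refine Finset.sum_congr rfl fun x _ => Finset.sum_congr rfl fun a _ => ?_
  change f (List.ofFn (Fin.snoc x a)) = _
  rw [List.ofFn_succ']
  simp

/-- A probability measure on infinite sequences over `A`, given by its values on cylinder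
sets: `ρ l` is the probability that a sequence starts with `l`. -/
structure IsPrefixMeasure {A : Type} [Fintype A] (ρ : List A → ℝ) : Prop where
  nonneg : ∀ l, 0 ≤ ρ l
  nil : ρ [] = 1
  sum_append_singleton : ∀ l, ∑ a, ρ (l ++ [a]) = ρ l

namespace IsPrefixMeasure

variable {A : Type} [Fintype A] {ρ : List A → ℝ}

lemma append_singleton_le (hρ : IsPrefixMeasure ρ) (l : List A) (a : A) :
    ρ (l ++ [a]) ≤ ρ l :=
  hρ.sum_append_singleton l ▸ Finset.single_le_sum (f := fun b => ρ (l ++ [b]))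
    (fun _ _ => hρ.nonneg _) (Finset.mem_univ a)

lemma le_one (hρ : IsPrefixMeasure ρ) (l : List A) : ρ l ≤ 1 := by
  induction l using List.reverseRecOn with
  | nil => exact hρ.nil.le
  | append_singleton l a ih => exact (hρ.append_singleton_le l a).trans ih

lemma sum_ofFn (hρ : IsPrefixMeasure ρ) (k : ℕ) : ∑ x : Fin k → A, ρ (List.ofFn x) = 1 := by
  induction k with
  | zero => simp [hρ.nil]
  | succ k ih => simpa only [sum_ofFn_succ, hρ.sum_append_singleton] using ih

lemma condP_le_one (hρ : IsPrefixMeasure ρ) (l : List A) (a : A) : condP ρ l a ≤ 1 :=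
  div_le_one_of_le₀ (hρ.append_singleton_le l a) (hρ.nonneg l)

lemma condP_mem_stdSimplex (hρ : IsPrefixMeasure ρ) {l : List A} (hl : ρ l ≠ 0) :
    condP ρ l ∈ stdSimplex ℝ A :=
  ⟨fun a => div_nonneg (hρ.nonneg _) (hρ.nonneg _), by
    simp only [condP, ← Finset.sum_div, hρ.sum_append_singleton, div_self hl]⟩

lemma summable_mul {ι : Type*} {μs : ι → List A → ℝ} {w : ι → ℝ} (hw : ∀ i, 0 ≤ w i)
    (hw1 : HasSum w 1) (hμs : ∀ i, IsPrefixMeasure (μs i)) (l : List A) :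
    Summable fun i => w i * μs i l :=
  hw1.summable.of_nonneg_of_le (fun i => mul_nonneg (hw i) ((hμs i).nonneg l))
    fun i => mul_le_of_le_one_right (hw i) ((hμs i).le_one l)

lemma tsum_mul {ι : Type*} {μs : ι → List A → ℝ} {w : ι → ℝ} (hw : ∀ i, 0 ≤ w i)
    (hw1 : HasSum w 1) (hμs : ∀ i, IsPrefixMeasure (μs i)) :
    IsPrefixMeasure fun l => ∑' i, w i * μs i l where
  nonneg l := tsum_nonneg fun i => mul_nonneg (hw i) ((hμs i).nonneg l)
  nil := by simpa [(hμs _).nil] using hw1.tsum_eq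
  sum_append_singleton l := by
    rw [← Summable.tsum_finsetSum fun a _ => summable_mul hw hw1 hμs _]
    simp_rw [← Finset.mul_sum, (hμs _).sum_append_singleton]

lemma mul_le_tsum_mul {ι : Type*} {μs : ι → List A → ℝ} {w : ι → ℝ} (hw : ∀ i, 0 ≤ w i)
    (hw1 : HasSum w 1) (hμs : ∀ i, IsPrefixMeasure (μs i)) (i : ι) (l : List A) :
    w i * μs i l ≤ ∑' j, w j * μs j l :=
  (summable_mul hw hw1 hμs l).le_tsum i fun j _ => mul_nonneg (hw j) ((hμs j).nonneg l)

end IsPrefixMeasure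

section Prediction

open Finset

variable {A : Type} [Fintype A] {μ ξ : List A → ℝ}

noncomputable def condKL (μ ξ : List A → ℝ) (l : List A) : ℝ :=
  ∑ a, condP μ l a * log (condP μ l a / condP ξ l a)

lemma condP_eq_zero_of_condP_eq_zero (hμξ : ∀ l, ξ l = 0 → μ l = 0) {l : List A} {a : A}
    (h : condP ξ l a = 0) : condP μ l a = 0 := by
  rcases div_eq_zero_iff.1 h with h | h <;> simp [condP, hμξ _ h]

lemma condKL_nonneg (hμ : IsPrefixMeasure μ) (hξ : IsPrefixMeasure ξ)
    (hμξ : ∀ l, ξ l = 0 → μ l = 0) {l : List A} (hl : μ l ≠ 0) : 0 ≤ condKL μ ξ l :=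
  (by positivity : (0 : ℝ) ≤ 2 * tvDist _ _ ^ 2).trans <|
    two_mul_tvDist_sq_le (hμ.condP_mem_stdSimplex hl) (hξ.condP_mem_stdSimplex (mt (hμξ l) hl))
      fun _ => condP_eq_zero_of_condP_eq_zero hμξ

lemma sq_mul_condP_sub_le (hμ : IsPrefixMeasure μ) (hξ : IsPrefixMeasure ξ)
    (hμξ : ∀ l, ξ l = 0 → μ l = 0) (l : List A) {y z : A}
    (hy : ∀ a, condP ξ l a ≤ condP ξ l y) (hz : ∀ a, condP μ l a ≤ condP μ l z) :
    (μ l * (condP μ l z - condP μ l y)) ^ 2 ≤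
      (μ l * (1 - condP μ l y) + μ l * (1 - condP μ l z)) * (2 * (μ l * condKL μ ξ l)) := by
  rcases eq_or_ne (μ l) 0 with hl | hl
  · simp [hl]
  have key := sq_sub_le_of_forall_le (hμ.condP_mem_stdSimplex hl)
    (hξ.condP_mem_stdSimplex (mt (hμξ l) hl)) (fun _ => condP_eq_zero_of_condP_eq_zero hμξ) hy hz
  calc (μ l * (condP μ l z - condP μ l y)) ^ 2 = μ l ^ 2 * (condP μ l z - condP μ l y) ^ 2 := by
        ring
    _ ≤ μ l ^ 2 * (2 * ((1 - condP μ l y) + (1 - condP μ l z)) * condKL μ ξ l) := by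
        gcongr
        exact key
    _ = _ := by ring

lemma sq_sum_range_sum_ofFn_le {r f g : List A → ℝ} (hf : ∀ l, 0 ≤ f l) (hg : ∀ l, 0 ≤ g l)
    (h : ∀ l, r l ^ 2 ≤ f l * g l) (n : ℕ) :
    (∑ k ∈ range n, ∑ x : Fin k → A, r (List.ofFn x)) ^ 2 ≤
      (∑ k ∈ range n, ∑ x : Fin k → A, f (List.ofFn x)) *
        ∑ k ∈ range n, ∑ x : Fin k → A, g (List.ofFn x) :=
  sum_sq_le_sum_mul_sum_of_sq_le_mul _ (fun _ _ => sum_nonneg fun _ _ => hf _)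
    (fun _ _ => sum_nonneg fun _ _ => hg _)
    fun _ _ => sum_sq_le_sum_mul_sum_of_sq_le_mul _ (fun _ _ => hf _) (fun _ _ => hg _)
      fun _ _ => h _

lemma errE_sub_errE (μ : List A → ℝ) (p q : List A → A) (n : ℕ) :
    errE μ p n - errE μ q n = ∑ k ∈ range n, ∑ x : Fin k → A,
      μ (List.ofFn x) * (condP μ (List.ofFn x) (q (List.ofFn x)) -
        condP μ (List.ofFn x) (p (List.ofFn x))) := by
  simp only [errE, ← sum_sub_distrib]
  exact sum_congr rfl fun _ _ => sum_congr rfl fun _ _ => by ring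

lemma errE_nonneg (hμ : IsPrefixMeasure μ) (p : List A → A) (n : ℕ) : 0 ≤ errE μ p n :=
  sum_nonneg fun _ _ => sum_nonneg fun _ _ =>
    mul_nonneg (hμ.nonneg _) (sub_nonneg.2 (hμ.condP_le_one _ _))

lemma errE_sub_errE_nonneg (hμ : IsPrefixMeasure μ) {p q : List A → A}
    (hq : ∀ l a, condP μ l a ≤ condP μ l (q l)) (n : ℕ) : 0 ≤ errE μ p n - errE μ q n := by
  rw [errE_sub_errE]
  exact sum_nonneg fun _ _ => sum_nonneg fun _ _ =>
    mul_nonneg (hμ.nonneg _) (sub_nonneg.2 (hq _ _))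

lemma relEnt_nonneg (hμ : IsPrefixMeasure μ) (hξ : IsPrefixMeasure ξ)
    (hμξ : ∀ l, ξ l = 0 → μ l = 0) (n : ℕ) : 0 ≤ relEnt μ ξ n := by
  refine sum_nonneg fun _ _ => sum_nonneg fun x _ => ?_
  rcases eq_or_ne (μ (List.ofFn x)) 0 with hx | hx
  · simp [hx]
  · exact mul_nonneg (hμ.nonneg _) (condKL_nonneg hμ hξ hμξ hx)

theorem sq_errE_sub_errE_le (hμ : IsPrefixMeasure μ) (hξ : IsPrefixMeasure ξ)
    (hμξ : ∀ l, ξ l = 0 → μ l = 0) {predμ predξ : List A → A}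
    (hpredμ : ∀ l a, condP μ l a ≤ condP μ l (predμ l))
    (hpredξ : ∀ l a, condP ξ l a ≤ condP ξ l (predξ l)) (n : ℕ) :
    (errE μ predξ n - errE μ predμ n) ^ 2 ≤
      (errE μ predξ n + errE μ predμ n) * (2 * relEnt μ ξ n) := by
  have hadd : errE μ predξ n + errE μ predμ n = ∑ k ∈ range n, ∑ x : Fin k → A,
      (μ (List.ofFn x) * (1 - condP μ (List.ofFn x) (predξ (List.ofFn x))) +
        μ (List.ofFn x) * (1 - condP μ (List.ofFn x) (predμ (List.ofFn x)))) := by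
    simp only [errE, ← sum_add_distrib]
  have hmul : 2 * relEnt μ ξ n = ∑ k ∈ range n, ∑ x : Fin k → A,
      2 * (μ (List.ofFn x) * condKL μ ξ (List.ofFn x)) := by
    rw [relEnt, mul_sum]
    exact sum_congr rfl fun _ _ => mul_sum _ _ _
  rw [errE_sub_errE, hadd, hmul]
  refine sq_sum_range_sum_ofFn_le (fun l => ?_) (fun l => ?_)
    (fun l => sq_mul_condP_sub_le hμ hξ hμξ l (hpredξ l) (hpredμ l)) n
  · exact add_nonneg (mul_nonneg (hμ.nonneg l) (sub_nonneg.2 (hμ.condP_le_one l _)))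
      (mul_nonneg (hμ.nonneg l) (sub_nonneg.2 (hμ.condP_le_one l _)))
  · rcases eq_or_ne (μ l) 0 with hl | hl
    · simp [hl]
    · exact mul_nonneg two_pos.le (mul_nonneg (hμ.nonneg l) (condKL_nonneg hμ hξ hμξ hl))

lemma sum_mul_log_div_append_singleton (hμ : IsPrefixMeasure μ)
    (hμξ : ∀ l, ξ l = 0 → μ l = 0) (l : List A) :
    ∑ a, μ (l ++ [a]) * log (μ (l ++ [a]) / ξ (l ++ [a])) =
      μ l * log (μ l / ξ l) + μ l * condKL μ ξ l := by
  have hterm : ∀ a, μ (l ++ [a]) * log (μ (l ++ [a]) / ξ (l ++ [a])) =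
      μ (l ++ [a]) * log (μ l / ξ l) +
        μ l * (condP μ l a * log (condP μ l a / condP ξ l a)) := fun a => by
    rcases eq_or_ne (μ (l ++ [a])) 0 with hla | hla
    · simp [condP, hla]
    have hl : μ l ≠ 0 := fun h =>
      hla (le_antisymm (h ▸ hμ.append_singleton_le l a) (hμ.nonneg _))
    rw [condP, condP, div_div_div_comm, log_div (div_ne_zero hla (mt (hμξ _) hla))
      (div_ne_zero hl (mt (hμξ l) hl))]
    field_simp
    ring
  rw [sum_congr rfl fun a _ => hterm a, sum_add_distrib, ← sum_mul, hμ.sum_append_singleton,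
    ← mul_sum, condKL]

theorem relEnt_eq_sum_mul_log_div (hμ : IsPrefixMeasure μ) (hξ : ξ [] = 1)
    (hμξ : ∀ l, ξ l = 0 → μ l = 0) (n : ℕ) :
    relEnt μ ξ n = ∑ x : Fin n → A, μ (List.ofFn x) * log (μ (List.ofFn x) / ξ (List.ofFn x)) := by
  set F : ℕ → ℝ := fun k => ∑ x : Fin k → A,
    μ (List.ofFn x) * log (μ (List.ofFn x) / ξ (List.ofFn x))
  have hF0 : F 0 = 0 := by simp [F, hμ.nil, hξ]
  have hstep : ∀ k, F (k + 1) - F k = ∑ x : Fin k → A, μ (List.ofFn x) * condKL μ ξ (List.ofFn x) :=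
    fun k => by
      rw [sub_eq_iff_eq_add',
        show F (k + 1) = _ from sum_ofFn_succ (fun l => μ l * log (μ l / ξ l)) k]
      simp only [sum_mul_log_div_append_singleton hμ hμξ, sum_add_distrib]
      rfl
  change _ = F n
  rw [← sub_zero (F n), ← hF0, ← sum_range_sub]
  exact sum_congr rfl fun k _ => (hstep k).symm

lemma IsPrefixMeasure.sum_mul_log_div_le (hμ : IsPrefixMeasure μ) {c : ℝ} (hc : 0 < c)
    (hle : ∀ l, c * μ l ≤ ξ l) (n : ℕ) :
    ∑ x : Fin n → A, μ (List.ofFn x) * log (μ (List.ofFn x) / ξ (List.ofFn x)) ≤ log (1 / c) := by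
  calc ∑ x : Fin n → A, μ (List.ofFn x) * log (μ (List.ofFn x) / ξ (List.ofFn x))
      ≤ ∑ x : Fin n → A, μ (List.ofFn x) * log (1 / c) := sum_le_sum fun x _ => by
        rcases (hμ.nonneg (List.ofFn x)).eq_or_lt with hx | hx
        · simp [← hx]
        have hξx : 0 < ξ (List.ofFn x) := (mul_pos hc hx).trans_le (hle _)
        refine mul_le_mul_of_nonneg_left (log_le_log (div_pos hx hξx) ?_) hx.le
        rw [div_le_div_iff₀ hξx hc]
        linarith [hle (List.ofFn x)]
    _ = log (1 / c) := by rw [← sum_mul, hμ.sum_ofFn, one_mul]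

end Prediction

/-- Error bound theorem: 0 ≤ E_{nΘ_ξ} − E_{nΘ_μ} ≤ H_n + √(4 E_{nΘ_μ} H_n + H_n²)
≤ 2H_n + 2√(E_{nΘ_μ} H_n), with H_n ≤ ln(1/w_μ). -/
theorem error_bound {A : Type} [Fintype A]
    (μs : ℕ → List A → ℝ) (w : ℕ → ℝ)
    (hwpos : ∀ i, 0 < w i) (hwsum : HasSum w 1)
    (hnn : ∀ i l, 0 ≤ μs i l)
    (hroot : ∀ i, μs i [] = 1)
    (hcompat : ∀ i l, ∑ a : A, μs i (l ++ [a]) = μs i l)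
    (ξ : List A → ℝ) (hξ : ∀ l, ξ l = ∑' i, w i * μs i l)
    (i0 : ℕ)
    (predμ predξ : List A → A)
    (hpredμ : ∀ l a, condP (μs i0) l a ≤ condP (μs i0) l (predμ l))
    (hpredξ : ∀ l a, condP ξ l a ≤ condP ξ l (predξ l)) :
    ∀ n : ℕ,
      0 ≤ errE (μs i0) predξ n - errE (μs i0) predμ n ∧
      errE (μs i0) predξ n - errE (μs i0) predμ n ≤
        relEnt (μs i0) ξ n +
          Real.sqrt (4 * errE (μs i0) predμ n * relEnt (μs i0) ξ n + (relEnt (μs i0) ξ n) ^ 2) ∧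
      relEnt (μs i0) ξ n +
          Real.sqrt (4 * errE (μs i0) predμ n * relEnt (μs i0) ξ n + (relEnt (μs i0) ξ n) ^ 2) ≤
        2 * relEnt (μs i0) ξ n +
          2 * Real.sqrt (errE (μs i0) predμ n * relEnt (μs i0) ξ n) ∧
      relEnt (μs i0) ξ n ≤ Real.log (1 / w i0) := by
  intro n
  have hμs : ∀ i, IsPrefixMeasure (μs i) := fun i => ⟨hnn i, hroot i, hcompat i⟩
  obtain rfl : ξ = fun l => ∑' i, w i * μs i l := funext hξ
  have hξm := IsPrefixMeasure.tsum_mul (fun i => (hwpos i).le) hwsum hμs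
  have hdom := IsPrefixMeasure.mul_le_tsum_mul (fun i => (hwpos i).le) hwsum hμs i0
  have hμξ : ∀ l, ∑' i, w i * μs i l = 0 → μs i0 l = 0 := fun l h =>
    le_antisymm (nonpos_of_mul_nonpos_right (h ▸ hdom l) (hwpos i0)) (hnn i0 l)
  refine ⟨errE_sub_errE_nonneg (hμs i0) hpredμ n,
    sub_le_add_sqrt_of_sq_sub_le (sq_errE_sub_errE_le (hμs i0) hξm hμξ hpredμ hpredξ n),
    add_sqrt_four_mul_add_sq_le (errE_nonneg (hμs i0) predμ n)
      (relEnt_nonneg (hμs i0) hξm hμξ n), ?_⟩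
  rw [relEnt_eq_sum_mul_log_div (hμs i0) hξm.nil hμξ]
  exact (hμs i0).sum_mul_log_div_le (hwpos i0) hdom n
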